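/- arXiv:math/0502275 — 5 statements merged into one kernel-verified Lean document; each statement's English description precedes it below -/
import Mathlib

section
/- Suppose X is admissible with base point p, and φ : π₁(X,p) → lim← π₁(Xₙ,p₁) is the canonical homomorphism induced by the projections Rₙ : X → Xₙ. If φ is injective, then the topological fundamental group π₁(X,p) is a T₁ space. -/
open Set Topology unitInterval

noncomputable section

/-- The loop space `C_p(X)`: continuous maps `f : [0,1] → X` with `f 0 = f 1 = p`,
with the topology of uniform convergence (the compact-open topology on `C(I,X)`,
which agrees with uniform convergence for metric `X`). -/
def LoopSp (X : Type) [TopologicalSpace X] (p : X) : Type :=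
  {f : C(unitInterval, X) // f 0 = p ∧ f 1 = p}

instance (X : Type) [TopologicalSpace X] (p : X) : TopologicalSpace (LoopSp X p) :=
  inferInstanceAs (TopologicalSpace {f : C(unitInterval, X) // f 0 = p ∧ f 1 = p})

/-- The topological fundamental group `π₁(X,p)`: the set of path components of the
loop space `C_p(X)`, with the quotient topology. -/
def TopPi1 (X : Type) [TopologicalSpace X] (p : X) : Type :=
  @Quotient (LoopSp X p) (pathSetoid _)

instance (X : Type) [TopologicalSpace X] (p : X) : TopologicalSpace (TopPi1 X p) :=
  inferInstanceAs (TopologicalSpace (@Quotient (LoopSp X p) (pathSetoid _)))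

/-- The class in `π₁(X,p)` of a loop. -/
def TopPi1.mk {X : Type} [TopologicalSpace X] {p : X} (f : LoopSp X p) : TopPi1 X p :=
  @Quotient.mk _ (pathSetoid _) f

/-- A continuous map sending `p` to `q` induces a map on loops. -/
def LoopSp.map {X Y : Type} [TopologicalSpace X] [TopologicalSpace Y] {p : X} {q : Y}
    (f : C(X, Y)) (hf : f p = q) : LoopSp X p → LoopSp Y q :=
  fun α => ⟨f.comp α.1, by simp [α.2.1, α.2.2, hf]⟩

lemma LoopSp.continuous_map {X Y : Type} [TopologicalSpace X] [TopologicalSpace Y]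
    {p : X} {q : Y} (f : C(X, Y)) (hf : f p = q) :
    Continuous (LoopSp.map f hf) :=
  Continuous.subtype_mk ((ContinuousMap.continuous_postcomp f).comp continuous_subtype_val) _

/-- The homomorphism `f_* : π₁(X,p) → π₁(Y,q)` induced by a continuous map `f` with
`f p = q`, namely `f_*[α] = [f ∘ α]`. -/
def TopPi1.map {X Y : Type} [TopologicalSpace X] [TopologicalSpace Y] {p : X} {q : Y}
    (f : C(X, Y)) (hf : f p = q) : TopPi1 X p → TopPi1 Y q :=
  @Quotient.map _ _ (pathSetoid _) (pathSetoid _) (LoopSp.map f hf)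
    (fun _ _ h => ⟨h.somePath.map (LoopSp.continuous_map f hf)⟩)

/-- A space is totally path disconnected if each of its path components is a single point. -/
def IsTotallyPathDisconnected (Y : Type) [TopologicalSpace Y] : Prop :=
  ∀ x y : Y, Joined x y → x = y

/-- A continuous surjection is a (Hurewicz) fibration if it has the homotopy lifting
property with respect to all spaces. -/
def IsFibration {E B : Type} [TopologicalSpace E] [TopologicalSpace B] (q : E → B) : Prop :=
  Function.Surjective q ∧ Continuous q ∧
    ∀ (Y : Type) [TopologicalSpace Y] (f : Y → E) (F : Y × unitInterval → B),
      Continuous f → Continuous F → (∀ y, F (y, 0) = q (f y)) →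
      ∃ G : Y × unitInterval → E, Continuous G ∧ (∀ z, q (G z) = F z) ∧
        ∀ y, G (y, 0) = f y

end

/-- If `X` is admissible and the canonical homomorphism
`φ : π₁(X,p) → lim← π₁(Xₙ,p₁)` is injective, then the topological fundamental group
`π₁(X,p)` is a T₁ space. -/
theorem stmt2
    -- an ambient metric space containing the nested sequence
    (A : Type) [MetricSpace A]
    -- the nested sequence {p₁} ⊆ X₁ ⊆ X₂ ⊆ ⋯ of path-connected separable metric spaces
    (Xs : ℕ → Set A) (hmono : Monotone Xs)
    (p1 : A) (hp1 : p1 ∈ Xs 0)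
    (hpc : ∀ n, IsPathConnected (Xs n))
    (hsep : ∀ n, TopologicalSpace.SeparableSpace (Xs n))
    -- the retractions rₙ : Xₙ₊₁ → Xₙ, restricting to the identity on Xₙ
    (r : ∀ n, C(↥(Xs (n + 1)), ↥(Xs n)))
    (hr : ∀ n (x : ↥(Xs n)), r n (Set.inclusion (hmono (Nat.le_succ n)) x) = x)
    -- each π₁(Xₙ, p₁) is totally disconnected
    (htd : ∀ n, TotallyDisconnectedSpace (TopPi1 (↥(Xs n)) ⟨p1, hmono (Nat.zero_le n) hp1⟩))
    -- the inverse limit X = lim← Xₙ, as a subspace of the product ∏ₙ Xₙ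
    (L : Set (∀ m, ↥(Xs m))) (hLdef : L = {x | ∀ m, r m (x (m + 1)) = x m})
    -- the base point p = (p₁, p₁, …)
    (p : ↥L) (hp : ∀ n, (p.1 n : A) = p1)
    -- the canonical homomorphism φ([f]) = (R₁*([f]), R₂*([f]), …) induced by the
    -- projections Rₙ : X → Xₙ (injectivity into lim← π₁(Xₙ,p₁) is the same as
    -- injectivity into the product ∏ₙ π₁(Xₙ,p₁), which contains it)
    (φ : TopPi1 (↥L) p → ∀ n, TopPi1 (↥(Xs n)) ⟨p1, hmono (Nat.zero_le n) hp1⟩)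
    (hφ : ∀ γ n, φ γ n =
      TopPi1.map ⟨fun x : ↥L => x.1 n, ((continuous_apply n).comp continuous_subtype_val)⟩
        (Subtype.ext (hp n)) γ)
    (hinj : Function.Injective φ) :
    T1Space (TopPi1 (↥L) p) := by
  have hT1 : ∀ n, T1Space (TopPi1 (↥(Xs n)) ⟨p1, hmono (Nat.zero_le n) hp1⟩) := by
    intro n
    constructor
    intro x
    have h := totallyDisconnectedSpace_iff_connectedComponent_singleton.mp (htd n) x
    rw [← h]
    exact isClosed_connectedComponent
  haveI := hT1
  have hφc : Continuous φ := by
    have heq : φ = fun γ n =>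
        TopPi1.map ⟨fun x : ↥L => x.1 n, ((continuous_apply n).comp continuous_subtype_val)⟩
          (Subtype.ext (hp n)) γ := by
      funext γ n; exact hφ γ n
    rw [heq]
    apply continuous_pi
    intro n
    exact Continuous.quotient_map' (LoopSp.continuous_map _ _) _
  constructor
  intro x
  have : {x} = φ ⁻¹' {φ x} := by
    ext y
    simp [hinj.eq_iff, eq_comm]
  rw [this]
  exact IsClosed.preimage hφc isClosed_singleton
end

section
/- If X is a separable metric space and p ∈ X, then the topological fundamental group π₁(X,p) is a Lindelöf space. -/
open Set Topology unitInterval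

/-- If `X` is a separable metric space and `p ∈ X`, then the topological fundamental
group `π₁(X,p)` is a Lindelöf space. -/
theorem stmt4 (X : Type) [MetricSpace X] [TopologicalSpace.SeparableSpace X] (p : X) :
    LindelofSpace (TopPi1 X p) := by
  have : SecondCountableTopology X := UniformSpace.secondCountable_of_separable X
  have : SecondCountableTopology C(unitInterval, X) := inferInstance
  have : SecondCountableTopology (LoopSp X p) :=
    inferInstanceAs (SecondCountableTopology {f : C(unitInterval, X) // f 0 = p ∧ f 1 = p})
  have hL : LindelofSpace (LoopSp X p) := inferInstance
  have hcont : Continuous (fun f : LoopSp X p => TopPi1.mk f) :=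
    continuous_quotient_mk'
  have hsurj : Function.Surjective (fun f : LoopSp X p => TopPi1.mk f) :=
    @Quotient.mk''_surjective _ (pathSetoid _)
  rw [← isLindelof_univ_iff, ← hsurj.range_eq]
  exact isLindelof_range hcont
end

section
/- Suppose X is admissible with base point p, and φ : π₁(X,p) → lim← π₁(Xₙ,p₁) is the canonical homomorphism induced by the projections Rₙ : X → Xₙ. If the topological fundamental group π₁(X,p) is a T₁ space, then φ is injective. Equivalently: if π₁(X,p) is T₁ and f is a loop in X based at p such that for every n the projected loop Rₙ∘f is null-homotopic in Xₙ, then f is null-homotopic in X. -/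
open Set Topology unitInterval

/-!
For a loop `f` at `p` in `X = lim← Xₙ`, let `ιₙ : Xₙ → X` be the section of the projection `Rₙ`
whose coordinates below `n` are given by the retractions and above `n` by the inclusions. The
loops `ιₙ ∘ Rₙ ∘ f` agree with `f` in the first `n` coordinates, so they converge to `f` in
`C_p(X)`. If every `Rₙ ∘ f` is null-homotopic, then so is every `ιₙ ∘ Rₙ ∘ f`: the class `[f]` is
a limit of the constant sequence at the trivial class, which in the T₁ space `π₁(X,p)` forces
`[f]` to be trivial. Injectivity of `φ` follows by applying this to `f · g⁻¹`.
-/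

open Filter

namespace LoopSp

variable {X Y : Type} [TopologicalSpace X] [TopologicalSpace Y] {p : X} {q : Y}

variable (X p) in
def const : LoopSp X p := ⟨ContinuousMap.const _ p, rfl, rfl⟩

def equivPath : LoopSp X p ≃ Path p p where
  toFun f := ⟨f.1, f.2.1, f.2.2⟩
  invFun γ := ⟨γ.toContinuousMap, γ.source, γ.target⟩

theorem joined_iff_homotopic {f g : LoopSp X p} :
    Joined f g ↔ (equivPath f).Homotopic (equivPath g) := by
  constructor
  · rintro ⟨γ⟩
    refine ⟨{ toFun := fun st => (γ st.1).1 st.2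
              continuous_toFun := ?_
              map_zero_left := fun t => congrArg (fun k : LoopSp X p => k.1 t) γ.source
              map_one_left := fun t => congrArg (fun k : LoopSp X p => k.1 t) γ.target
              prop' := ?_ }⟩
    · exact continuous_eval.comp
        (((continuous_subtype_val.comp γ.continuous).comp continuous_fst).prodMk continuous_snd)
    · rintro t x (rfl | rfl)
      · exact (γ t).2.1.trans f.2.1.symm
      · exact (γ t).2.2.trans f.2.2.symm
  · rintro ⟨H⟩
    refine ⟨{ toFun := fun s => ⟨H.toContinuousMap.curry s, ?_, ?_⟩
              continuous_toFun := H.toContinuousMap.curry.continuous.subtype_mk _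
              source' := Subtype.ext (ContinuousMap.ext H.map_zero_left)
              target' := Subtype.ext (ContinuousMap.ext H.map_one_left) }⟩
    · exact (H.prop' s 0 (by simp)).trans f.2.1
    · exact (H.prop' s 1 (by simp)).trans f.2.2

theorem map_const (F : C(X, Y)) (hF : F p = q) : map F hF (const X p) = const Y q :=
  Subtype.ext (ContinuousMap.ext fun _ => hF)

end LoopSp

namespace Path.Homotopic.Quotient

variable {X Y : Type} [TopologicalSpace X] [TopologicalSpace Y] {x₀ x₁ x₂ : X}

theorem map_trans (γ₀ : Path.Homotopic.Quotient x₀ x₁) (γ₁ : Path.Homotopic.Quotient x₁ x₂)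
    (F : C(X, Y)) : (γ₀.trans γ₁).map F = (γ₀.map F).trans (γ₁.map F) := by
  induction γ₀ using Quotient.ind
  induction γ₁ using Quotient.ind
  simp only [← mk_trans, ← mk_map, Path.map_trans]

theorem map_symm (γ : Path.Homotopic.Quotient x₀ x₁) (F : C(X, Y)) :
    γ.symm.map F = (γ.map F).symm := by
  induction γ using Quotient.ind
  simp only [← mk_symm, ← mk_map, Path.map_symm]

end Path.Homotopic.Quotient

namespace TopPi1

variable {X Y : Type} [TopologicalSpace X] [TopologicalSpace Y] {p : X} {q : Y}

theorem mk_surjective : Function.Surjective (mk : LoopSp X p → TopPi1 X p) :=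
  @Quotient.mk_surjective _ (pathSetoid _)

theorem continuous_mk : Continuous (mk : LoopSp X p → TopPi1 X p) :=
  continuous_quotient_mk'

theorem map_mk (F : C(X, Y)) (hF : F p = q) (f : LoopSp X p) :
    map F hF (mk f) = mk (LoopSp.map F hF f) :=
  rfl

def equivHomotopicQuotient : TopPi1 X p ≃ Path.Homotopic.Quotient p p :=
  @Quotient.congr _ _ (pathSetoid _) (Path.Homotopic.setoid p p) LoopSp.equivPath
    fun _ _ => LoopSp.joined_iff_homotopic

theorem equivHomotopicQuotient_mk_const :
    equivHomotopicQuotient (mk (LoopSp.const X p)) = Path.Homotopic.Quotient.refl p :=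
  rfl

theorem equivHomotopicQuotient_map (F : C(X, Y)) (γ : TopPi1 X p) :
    equivHomotopicQuotient (map F rfl γ) = (equivHomotopicQuotient γ).map F := by
  induction γ using Quotient.ind
  rfl

theorem mk_eq_of_tendsto [T1Space (TopPi1 X p)] {α : Type*} {l : Filter α} [l.NeBot]
    {u : α → LoopSp X p} {f : LoopSp X p} (hu : Tendsto u l (𝓝 f)) {γ : TopPi1 X p}
    (hγ : ∀ a, mk (u a) = γ) : mk f = γ := by
  have h := (continuous_mk.tendsto f).comp hu
  rw [show mk ∘ u = fun _ => γ from funext hγ] at h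
  exact (tendsto_const_nhds_iff.mp h).symm

open Path.Homotopic.Quotient in
theorem injective_pi_map_of_forall_map_eq_mk_const {ι : Type*} {Y : ι → Type}
    [∀ i, TopologicalSpace (Y i)] {q : ∀ i, Y i} (F : ∀ i, C(X, Y i)) (hF : ∀ i, F i p = q i)
    (hker : ∀ γ : TopPi1 X p, (∀ i, map (F i) (hF i) γ = mk (LoopSp.const (Y i) (q i))) →
      γ = mk (LoopSp.const X p)) :
    Function.Injective fun γ i => map (F i) (hF i) γ := by
  obtain rfl : q = fun i => F i p := funext fun i => (hF i).symm
  intro a b hab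
  replace hab : ∀ i, map (F i) rfl a = map (F i) rfl b := congrFun hab
  set E := equivHomotopicQuotient (X := X) (p := p)
  have hdiff : E.symm ((E a).trans (E b).symm) = mk (LoopSp.const X p) := by
    refine hker _ fun i => equivHomotopicQuotient.injective ?_
    rw [equivHomotopicQuotient_map, Equiv.apply_symm_apply, map_trans, map_symm,
      ← equivHomotopicQuotient_map, ← equivHomotopicQuotient_map, hab i, trans_symm,
      equivHomotopicQuotient_mk_const]
  rw [E.symm_apply_eq, equivHomotopicQuotient_mk_const] at hdiff
  apply E.injective
  calc E a = ((E a).trans (E b).symm).trans (E b) := by rw [trans_assoc, symm_trans, trans_refl]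
    _ = E b := by rw [hdiff, refl_trans]

end TopPi1

theorem ContinuousMap.tendsto_of_eventually_apply_eq {K α ι : Type*} [TopologicalSpace K]
    [CompactSpace K] {Y : ι → Type*} [∀ i, UniformSpace (Y i)] {S : Set (∀ i, Y i)}
    {l : Filter α} {u : α → C(K, S)} {c : C(K, S)}
    (h : ∀ i, ∀ᶠ a in l, ∀ t, (u a t : ∀ i, Y i) i = (c t : ∀ i, Y i) i) :
    Tendsto u l (𝓝 c) := by
  rw [ContinuousMap.tendsto_iff_tendstoUniformly, tendstoUniformly_iff_tendsto,
    uniformity_subtype, tendsto_comap_iff, Pi.uniformity, tendsto_iInf]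
  intro i
  rw [tendsto_comap_iff]
  refine tendsto_def.mpr fun V hV => ?_
  filter_upwards [(h i).prod_inl ⊤] with a ha
  simpa [ha a.2] using refl_mem_uniformity hV

namespace InverseSeq

section

variable {Y : ℕ → Type*} [∀ n, TopologicalSpace (Y n)] (r : ∀ n, C(Y (n + 1), Y n))

-- Reducible, so that instances on `TopPi1` apply to points of the unfolded set `{x | …}` too.
abbrev limit : Set (∀ n, Y n) := {x | ∀ n, r n (x (n + 1)) = x n}

def proj (n : ℕ) : C(limit r, Y n) :=
  ⟨fun x => x.1 n, (continuous_apply n).comp continuous_subtype_val⟩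

def descend {m n : ℕ} (h : m ≤ n) : Y n → Y m :=
  Nat.leRec (motive := fun k _ => Y k → Y m) id (fun k _ f => f ∘ r k) h

variable {r}

@[simp] theorem descend_self (m : ℕ) : descend r (le_refl m) = id :=
  Nat.leRec_self _ _

theorem descend_succ {m n : ℕ} (h : m ≤ n) :
    descend r (h.trans n.le_succ) = descend r h ∘ r n :=
  Nat.leRec_succ _ _ h

theorem continuous_descend {m n : ℕ} (h : m ≤ n) : Continuous (descend r h) := by
  induction n, h using Nat.le_induction with
  | base => simpa using continuous_id
  | succ n h ih => rw [descend_succ h]; exact ih.comp (r n).continuous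

theorem descend_apply_of_mem {x : ∀ n, Y n} (hx : x ∈ limit r) {m n : ℕ} (h : m ≤ n) :
    descend r h (x n) = x m := by
  induction n, h using Nat.le_induction with
  | base => simp
  | succ n h ih => rw [descend_succ h, Function.comp_apply, hx n, ih]

theorem apply_descend {m n : ℕ} (h : m + 1 ≤ n) (y : Y n) :
    r m (descend r h y) = descend r (m.le_succ.trans h) y := by
  induction n, h using Nat.le_induction with
  | base => rw [descend_succ le_rfl]; simp
  | succ n h ih =>
    simp only [descend_succ h, descend_succ (m.le_succ.trans h), Function.comp_apply, ih]

end

section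

variable {Y : ℕ → Type*} [∀ n, TopologicalSpace (Y n)] {r : ∀ n, C(Y (n + 1), Y n)}
  (s : ∀ n, C(Y n, Y (n + 1)))

def ascend {n m : ℕ} (h : n ≤ m) : Y n → Y m :=
  Nat.leRec (motive := fun k _ => Y n → Y k) id (fun k _ f => s k ∘ f) h

variable {s}

@[simp] theorem ascend_self (n : ℕ) : ascend s (le_refl n) = id :=
  Nat.leRec_self _ _

theorem ascend_succ {n m : ℕ} (h : n ≤ m) : ascend s (h.trans m.le_succ) = s m ∘ ascend s h :=
  Nat.leRec_succ _ _ h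

theorem continuous_ascend {n m : ℕ} (h : n ≤ m) : Continuous (ascend s h) := by
  induction m, h using Nat.le_induction with
  | base => simpa using continuous_id
  | succ m h ih => rw [ascend_succ h]; exact (s m).continuous.comp ih

theorem ascend_apply_of_map_eq {x : ∀ n, Y n} (hx : ∀ n, s n (x n) = x (n + 1)) {n m : ℕ}
    (h : n ≤ m) : ascend s h (x n) = x m := by
  induction m, h using Nat.le_induction with
  | base => simp
  | succ m h ih => rw [ascend_succ h, Function.comp_apply, ih, hx]

variable (r s) in
def toLimitFun (n : ℕ) (y : Y n) (m : ℕ) : Y m :=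
  if h : m ≤ n then descend r h y else ascend s (le_of_not_ge h) y

theorem toLimitFun_mem (hrs : ∀ n y, r n (s n y) = y) (n : ℕ) (y : Y n) :
    toLimitFun r s n y ∈ limit r := by
  intro m
  rcases lt_trichotomy m n with hmn | rfl | hnm
  · have hmn' : m + 1 ≤ n := hmn
    simp only [toLimitFun, dif_pos hmn', dif_pos hmn.le]
    exact apply_descend hmn' y
  · simp only [toLimitFun, dif_pos le_rfl, dif_neg (by omega : ¬m + 1 ≤ m), descend_self]
    rw [ascend_succ le_rfl, ascend_self, Function.comp_apply, id, hrs]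
  · simp only [toLimitFun, dif_neg (by omega : ¬m + 1 ≤ n), dif_neg hnm.not_ge]
    rw [ascend_succ hnm.le, Function.comp_apply, hrs]

theorem continuous_toLimitFun (n : ℕ) : Continuous (toLimitFun r s n) := by
  refine continuous_pi fun m => ?_
  by_cases h : m ≤ n
  · simpa only [toLimitFun, dif_pos h] using continuous_descend h
  · simpa only [toLimitFun, dif_neg h] using continuous_ascend (le_of_not_ge h)

def toLimit (hrs : ∀ n y, r n (s n y) = y) (n : ℕ) : C(Y n, limit r) :=
  ⟨fun y => ⟨toLimitFun r s n y, toLimitFun_mem hrs n y⟩,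
    (continuous_toLimitFun n).subtype_mk _⟩

@[simp] theorem proj_apply (n : ℕ) (x : limit r) : proj r n x = (x : ∀ n, Y n) n :=
  rfl

@[simp] theorem coe_toLimit (hrs : ∀ n y, r n (s n y) = y) (n : ℕ) (y : Y n) :
    (toLimit hrs n y : ∀ n, Y n) = toLimitFun r s n y :=
  rfl

theorem toLimit_proj_apply_of_le (hrs : ∀ n y, r n (s n y) = y) {n m : ℕ} (h : m ≤ n)
    (x : limit r) : (toLimit hrs n (proj r n x) : ∀ n, Y n) m = (x : ∀ n, Y n) m := by
  simp only [coe_toLimit, proj_apply, toLimitFun, dif_pos h]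
  exact descend_apply_of_mem x.2 h

theorem toLimit_proj_of_map_eq (hrs : ∀ n y, r n (s n y) = y) {x : limit r}
    (hx : ∀ n, s n ((x : ∀ n, Y n) n) = (x : ∀ n, Y n) (n + 1)) (n : ℕ) :
    toLimit hrs n (proj r n x) = x := by
  ext m
  by_cases h : m ≤ n
  · exact toLimit_proj_apply_of_le hrs h x
  · simp only [coe_toLimit, proj_apply, toLimitFun, dif_neg h]
    exact ascend_apply_of_map_eq hx _

end

section

variable {Y : ℕ → Type} [∀ n, UniformSpace (Y n)] {r : ∀ n, C(Y (n + 1), Y n)}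
  {s : ∀ n, C(Y n, Y (n + 1))} (hrs : ∀ n y, r n (s n y) = y)
include hrs

theorem tendsto_toLimit_comp_proj {K : Type*} [TopologicalSpace K] [CompactSpace K]
    (c : C(K, limit r)) :
    Tendsto (fun n => ((toLimit hrs n).comp (proj r n)).comp c) atTop (𝓝 c) :=
  ContinuousMap.tendsto_of_eventually_apply_eq fun m =>
    (eventually_ge_atTop m).mono fun _ hn t => toLimit_proj_apply_of_le hrs hn (c t)

theorem eq_mk_const_of_forall_map_proj {p : limit r}
    (hp : ∀ n, s n ((p : ∀ n, Y n) n) = (p : ∀ n, Y n) (n + 1)) [T1Space (TopPi1 (limit r) p)]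
    {q : ∀ n, Y n} (hq : ∀ n, proj r n p = q n) (γ : TopPi1 (limit r) p)
    (hγ : ∀ n, TopPi1.map (proj r n) (hq n) γ = TopPi1.mk (LoopSp.const (Y n) (q n))) :
    γ = TopPi1.mk (LoopSp.const _ p) := by
  obtain rfl : q = fun n => proj r n p := funext fun n => (hq n).symm
  obtain ⟨f, rfl⟩ := TopPi1.mk_surjective γ
  have hι : ∀ n, toLimit hrs n (proj r n p) = p := toLimit_proj_of_map_eq hrs hp
  refine TopPi1.mk_eq_of_tendsto
    (u := fun n => LoopSp.map ((toLimit hrs n).comp (proj r n)) (hι n) f)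
    (tendsto_subtype_rng.mpr (tendsto_toLimit_comp_proj hrs f.1)) fun n => ?_
  calc TopPi1.mk (LoopSp.map _ _ f)
      = TopPi1.map (toLimit hrs n) (hι n) (TopPi1.map (proj r n) rfl (TopPi1.mk f)) := rfl
    _ = TopPi1.mk (LoopSp.const _ p) := by rw [hγ n, TopPi1.map_mk, LoopSp.map_const]

end

end InverseSeq

theorem stmt5_general
    -- an ambient metric space containing the nested sequence
    (A : Type) [MetricSpace A]
    -- the nested sequence {p₁} ⊆ X₁ ⊆ X₂ ⊆ ⋯ of path-connected separable metric spaces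
    (Xs : ℕ → Set A) (hmono : Monotone Xs)
    (p1 : A) (hp1 : p1 ∈ Xs 0)
    -- the retractions rₙ : Xₙ₊₁ → Xₙ, restricting to the identity on Xₙ
    (r : ∀ n, C(↥(Xs (n + 1)), ↥(Xs n)))
    (hr : ∀ n (x : ↥(Xs n)), r n (Set.inclusion (hmono (Nat.le_succ n)) x) = x)
    -- the inverse limit X = lim← Xₙ, as a subspace of the product ∏ₙ Xₙ
    (L : Set (∀ m, ↥(Xs m))) (hLdef : L = {x | ∀ m, r m (x (m + 1)) = x m})
    -- the base point p = (p₁, p₁, …)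
    (p : ↥L) (hp : ∀ n, (p.1 n : A) = p1)
    -- the canonical homomorphism φ([f]) = (R₁*([f]), R₂*([f]), …) induced by the
    -- projections Rₙ : X → Xₙ (injectivity into lim← π₁(Xₙ,p₁) is the same as
    -- injectivity into the product ∏ₙ π₁(Xₙ,p₁), which contains it)
    (φ : TopPi1 (↥L) p → ∀ n, TopPi1 (↥(Xs n)) ⟨p1, hmono (Nat.zero_le n) hp1⟩)
    (hφ : ∀ γ n, φ γ n =
      TopPi1.map ⟨fun x : ↥L => x.1 n, ((continuous_apply n).comp continuous_subtype_val)⟩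
        (Subtype.ext (hp n)) γ)
    (ht1 : T1Space (TopPi1 (↥L) p)) :
    Function.Injective φ ∧
      ∀ f : LoopSp (↥L) p,
        (∀ n, φ (TopPi1.mk f) n =
          TopPi1.mk (⟨ContinuousMap.const _ ⟨p1, hmono (Nat.zero_le n) hp1⟩, rfl, rfl⟩ :
            LoopSp (↥(Xs n)) ⟨p1, hmono (Nat.zero_le n) hp1⟩)) →
        TopPi1.mk f = TopPi1.mk (⟨ContinuousMap.const _ p, rfl, rfl⟩ : LoopSp (↥L) p) := by
  subst hLdef
  let s n : C(Xs n, Xs (n + 1)) := ⟨Set.inclusion (hmono n.le_succ), continuous_inclusion _⟩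
  have hker := InverseSeq.eq_mk_const_of_forall_map_proj (s := s) hr
    (fun n => Subtype.ext ((hp n).trans (hp (n + 1)).symm))
    (q := fun n => ⟨p1, hmono (Nat.zero_le n) hp1⟩) (fun n => Subtype.ext (hp n))
  obtain rfl : φ = fun γ n =>
      TopPi1.map (InverseSeq.proj (Y := fun n => Xs n) r n) (Subtype.ext (hp n)) γ :=
    funext fun γ => funext (hφ γ)
  exact ⟨TopPi1.injective_pi_map_of_forall_map_eq_mk_const _ _ hker, fun f hf => hker _ hf⟩

/-- If `X` is admissible with base point `p` and `π₁(X,p)` is a T₁ space, then the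
canonical homomorphism `φ : π₁(X,p) → lim← π₁(Xₙ,p₁)` is injective. Equivalently, if
`f` is a loop in `X` at `p` all of whose projections `Rₙ ∘ f` are null-homotopic in
`Xₙ`, then `f` is null-homotopic in `X`. -/
theorem stmt5
    -- an ambient metric space containing the nested sequence
    (A : Type) [MetricSpace A]
    -- the nested sequence {p₁} ⊆ X₁ ⊆ X₂ ⊆ ⋯ of path-connected separable metric spaces
    (Xs : ℕ → Set A) (hmono : Monotone Xs)
    (p1 : A) (hp1 : p1 ∈ Xs 0)
    (hpc : ∀ n, IsPathConnected (Xs n))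
    (hsep : ∀ n, TopologicalSpace.SeparableSpace (Xs n))
    -- the retractions rₙ : Xₙ₊₁ → Xₙ, restricting to the identity on Xₙ
    (r : ∀ n, C(↥(Xs (n + 1)), ↥(Xs n)))
    (hr : ∀ n (x : ↥(Xs n)), r n (Set.inclusion (hmono (Nat.le_succ n)) x) = x)
    -- each π₁(Xₙ, p₁) is totally disconnected
    (htd : ∀ n, TotallyDisconnectedSpace (TopPi1 (↥(Xs n)) ⟨p1, hmono (Nat.zero_le n) hp1⟩))
    -- the inverse limit X = lim← Xₙ, as a subspace of the product ∏ₙ Xₙ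
    (L : Set (∀ m, ↥(Xs m))) (hLdef : L = {x | ∀ m, r m (x (m + 1)) = x m})
    -- the base point p = (p₁, p₁, …)
    (p : ↥L) (hp : ∀ n, (p.1 n : A) = p1)
    -- the canonical homomorphism φ([f]) = (R₁*([f]), R₂*([f]), …) induced by the
    -- projections Rₙ : X → Xₙ (injectivity into lim← π₁(Xₙ,p₁) is the same as
    -- injectivity into the product ∏ₙ π₁(Xₙ,p₁), which contains it)
    (φ : TopPi1 (↥L) p → ∀ n, TopPi1 (↥(Xs n)) ⟨p1, hmono (Nat.zero_le n) hp1⟩)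
    (hφ : ∀ γ n, φ γ n =
      TopPi1.map ⟨fun x : ↥L => x.1 n, ((continuous_apply n).comp continuous_subtype_val)⟩
        (Subtype.ext (hp n)) γ)
    (ht1 : T1Space (TopPi1 (↥L) p)) :
    Function.Injective φ ∧
      ∀ f : LoopSp (↥L) p,
        (∀ n, φ (TopPi1.mk f) n =
          TopPi1.mk (⟨ContinuousMap.const _ ⟨p1, hmono (Nat.zero_le n) hp1⟩, rfl, rfl⟩ :
            LoopSp (↥(Xs n)) ⟨p1, hmono (Nat.zero_le n) hp1⟩)) →
        TopPi1.mk f = TopPi1.mk (⟨ContinuousMap.const _ p, rfl, rfl⟩ : LoopSp (↥L) p) :=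
  stmt5_general A Xs hmono p1 hp1 r hr L hLdef p hp φ hφ ht1
end

section
/- Suppose X is admissible with base point p, and φ : π₁(X,p) → lim← π₁(Xₙ,p₁) is the canonical homomorphism induced by the projections Rₙ : X → Xₙ. If φ is injective, then the topological fundamental group π₁(X,p) is totally disconnected. -/
open Set Topology unitInterval

/-- If `X` is admissible and the canonical homomorphism
`φ : π₁(X,p) → lim← π₁(Xₙ,p₁)` is injective, then `π₁(X,p)` is totally
disconnected. -/
theorem stmt6
    -- an ambient metric space containing the nested sequence
    (A : Type) [MetricSpace A]
    -- the nested sequence {p₁} ⊆ X₁ ⊆ X₂ ⊆ ⋯ of path-connected separable metric spaces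
    (Xs : ℕ → Set A) (hmono : Monotone Xs)
    (p1 : A) (hp1 : p1 ∈ Xs 0)
    (hpc : ∀ n, IsPathConnected (Xs n))
    (hsep : ∀ n, TopologicalSpace.SeparableSpace (Xs n))
    -- the retractions rₙ : Xₙ₊₁ → Xₙ, restricting to the identity on Xₙ
    (r : ∀ n, C(↥(Xs (n + 1)), ↥(Xs n)))
    (hr : ∀ n (x : ↥(Xs n)), r n (Set.inclusion (hmono (Nat.le_succ n)) x) = x)
    -- each π₁(Xₙ, p₁) is totally disconnected
    (htd : ∀ n, TotallyDisconnectedSpace (TopPi1 (↥(Xs n)) ⟨p1, hmono (Nat.zero_le n) hp1⟩))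
    -- the inverse limit X = lim← Xₙ, as a subspace of the product ∏ₙ Xₙ
    (L : Set (∀ m, ↥(Xs m))) (hLdef : L = {x | ∀ m, r m (x (m + 1)) = x m})
    -- the base point p = (p₁, p₁, …)
    (p : ↥L) (hp : ∀ n, (p.1 n : A) = p1)
    -- the canonical homomorphism φ([f]) = (R₁*([f]), R₂*([f]), …) induced by the
    -- projections Rₙ : X → Xₙ (injectivity into lim← π₁(Xₙ,p₁) is the same as
    -- injectivity into the product ∏ₙ π₁(Xₙ,p₁), which contains it)
    (φ : TopPi1 (↥L) p → ∀ n, TopPi1 (↥(Xs n)) ⟨p1, hmono (Nat.zero_le n) hp1⟩)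
    (hφ : ∀ γ n, φ γ n =
      TopPi1.map ⟨fun x : ↥L => x.1 n, ((continuous_apply n).comp continuous_subtype_val)⟩
        (Subtype.ext (hp n)) γ)
    (hinj : Function.Injective φ) :
    TotallyDisconnectedSpace (TopPi1 (↥L) p) := by
  haveI := htd
  have hcont : Continuous φ := by
    apply continuous_pi
    intro n
    have : (fun γ => φ γ n) = TopPi1.map
        ⟨fun x : ↥L => x.1 n, ((continuous_apply n).comp continuous_subtype_val)⟩
        (Subtype.ext (hp n)) := by
      funext γ; exact hφ γ n
    rw [this]
    exact Continuous.quotient_map' (LoopSp.continuous_map _ _) _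
  constructor
  intro t _ ht
  intro x hx y hy
  have himg : IsPreconnected (φ '' t) := ht.image φ hcont.continuousOn
  have := (isTotallyDisconnected_of_totallyDisconnectedSpace (φ '' t)) (φ '' t)
    subset_rfl himg ⟨x, hx, rfl⟩ ⟨y, hy, rfl⟩
  exact hinj this
end

section
/- Let X be a path-connected space, p ∈ X, and suppose q : E → X is a fibration whose fibers are all totally path disconnected and whose total space E is simply connected. Then the topological fundamental group π₁(X,p) is totally path disconnected. Moreover, fixing e ∈ E with q(e) = p, the map sending the class of a loop α ∈ C_p(X) to the endpoint F̃(α,1) of the unique lift of α starting at e is a well-defined continuous injection g : π₁(X,p) → q⁻¹(p). -/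
open Set Topology unitInterval

/-!
Lifting the evaluation homotopy `(α, t) ↦ α t` on the loop space, starting at the constant map
`e`, gives a continuous endpoint map `C_p(X) → q⁻¹(p)`. It is constant on path components since
the fibre is totally path disconnected, so it descends to `π₁(X,p)`. Lifts of a path are unique:
the lift of a loop that is null-homotopic rel endpoints is again a loop, because lifting the
null-homotopy puts its three remaining sides into fibres. If two lifts end at the same point they
are homotopic rel endpoints in `E`, as `E` has trivial `π₁`; projecting that homotopy joins the two
loops in `C_p(X)`. Finally, a continuous injection into a totally path disconnected space has a
totally path disconnected domain.
-/

section TotallyPathDisconnected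

variable {Y Z : Type} [TopologicalSpace Y] [TopologicalSpace Z]

lemma IsTotallyPathDisconnected.apply_eq_of_joined (hZ : IsTotallyPathDisconnected Z)
    {f : Y → Z} (hf : Continuous f) {a b : Y} (h : Joined a b) : f a = f b :=
  hZ _ _ (h.map hf)

lemma IsTotallyPathDisconnected.of_continuous_injective (hZ : IsTotallyPathDisconnected Z)
    {f : Y → Z} (hf : Continuous f) (hinj : Function.Injective f) :
    IsTotallyPathDisconnected Y :=
  fun _ _ h => hinj (hZ.apply_eq_of_joined hf h)

end TotallyPathDisconnected

namespace LoopSp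

variable {X : Type} [TopologicalSpace X] {p : X}

lemma joined_iff_homotopicRel {L₁ L₂ : LoopSp X p} :
    Joined L₁ L₂ ↔ L₁.1.HomotopicRel L₂.1 {0, 1} := by
  constructor
  · rintro ⟨P⟩
    let curried : C(I, C(I, X)) := ⟨fun s => (P s).1, continuous_subtype_val.comp P.continuous⟩
    refine ⟨⟨⟨curried.uncurry, fun t => by simp [curried], fun t => by simp [curried]⟩, ?_⟩⟩
    rintro s t (rfl | rfl) <;> simp [curried, (P s).2, L₁.2]
  · rintro ⟨H⟩
    refine ⟨⟨⟨fun s => ⟨H.curry s, ?_, ?_⟩, ?_⟩, ?_, ?_⟩⟩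
    · simpa [L₁.2] using H.eq_fst s (x := 0) (by simp)
    · simpa [L₁.2] using H.eq_fst s (x := 1) (by simp)
    · fun_prop
    · exact Subtype.ext (by simp)
    · exact Subtype.ext (by simp)

end LoopSp

open CategoryTheory in
lemma Path.homotopic_of_subsingleton_topPi1 {E : Type} [TopologicalSpace E] {a b : E}
    (ha : Subsingleton (TopPi1 E a)) (γ γ' : Path a b) : γ.Homotopic γ' := by
  let toLoop (γ : Path a a) : LoopSp E a := ⟨γ.toContinuousMap, γ.source, γ.target⟩
  have : Subsingleton ((⟨a⟩ : FundamentalGroupoid E) ⟶ ⟨a⟩) :=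
    ⟨Quotient.ind₂ fun γ₁ γ₂ => Quotient.sound <| LoopSp.joined_iff_homotopicRel.1 <|
      Quotient.exact (Subsingleton.elim (TopPi1.mk (toLoop γ₁)) (TopPi1.mk (toLoop γ₂)))⟩
  let f : (⟨a⟩ : FundamentalGroupoid E) ⟶ ⟨b⟩ := ⟦γ⟧
  let f' : (⟨a⟩ : FundamentalGroupoid E) ⟶ ⟨b⟩ := ⟦γ'⟧
  have hff' : f ≫ CategoryTheory.inv f' = 𝟙 _ := Subsingleton.elim _ _
  exact Quotient.exact ((comp_inv_eq_id f').1 hff')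

lemma LoopSp.joined_of_lifts_homotopic {X E : Type} [TopologicalSpace X] [TopologicalSpace E]
    {q : E → X} (hq : Continuous q) {p : X} {α α' : LoopSp X p} {e b : E} {β β' : Path e b}
    (hββ' : β.Homotopic β') (hβ : ∀ t, q (β t) = α.1 t) (hβ' : ∀ t, q (β' t) = α'.1 t) :
    Joined α α' := by
  have hα : (ContinuousMap.mk q hq).comp β.toContinuousMap = α.1 := by ext t; exact hβ t
  have hα' : (ContinuousMap.mk q hq).comp β'.toContinuousMap = α'.1 := by ext t; exact hβ' t
  rw [joined_iff_homotopicRel, ← hα, ← hα']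
  exact ContinuousMap.HomotopicRel.comp_continuousMap hββ' _

section TotallyPathDisconnectedFibers

variable {E X : Type} [TopologicalSpace E] {q : E → X}
  (hfib : ∀ x : X, IsTotallyPathDisconnected (q ⁻¹' {x}))
include hfib

lemma apply_zero_eq_apply_one_of_comp_eq_const (φ : C(I, E)) {x : X} (hφ : ∀ t, q (φ t) = x) :
    φ 0 = φ 1 :=
  congrArg Subtype.val <| hfib x _ _ (JoinedIn.joined_subtype ⟨⟨φ, rfl, rfl⟩, hφ⟩)

variable [TopologicalSpace X] (hq : IsFibration q)
include hq

lemma IsFibration.eq_of_lift_of_homotopic_refl {a b : E} (γ : Path a b) {x : X} {c : Path x x}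
    (hγ : ∀ t, q (γ t) = c t) (hc : c.Homotopic (Path.refl x)) : a = b := by
  obtain ⟨H⟩ := hc
  obtain ⟨G, hGc, hGq, hG0⟩ := hq.2.2 I γ (fun z => H (z.2, z.1)) γ.continuous (by fun_prop)
    (fun t => by simp [hγ])
  have hleft : G (0, 0) = G (0, 1) :=
    apply_zero_eq_apply_one_of_comp_eq_const hfib ⟨fun s => G (0, s), by fun_prop⟩
      (x := x) fun s => by simp [hGq]
  have hright : G (1, 0) = G (1, 1) :=
    apply_zero_eq_apply_one_of_comp_eq_const hfib ⟨fun s => G (1, s), by fun_prop⟩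
      (x := x) fun s => by simp [hGq]
  have htop : G (0, 1) = G (1, 1) :=
    apply_zero_eq_apply_one_of_comp_eq_const hfib ⟨fun t => G (t, 1), by fun_prop⟩
      (x := x) fun t => by simp [hGq]
  calc a = G (0, 0) := by simp [hG0]
    _ = G (1, 0) := hleft.trans (htop.trans hright.symm)
    _ = b := by simp [hG0]

lemma IsFibration.target_eq_of_lifts {a b b' : E} (β : Path a b) (β' : Path a b')
    (h : ∀ t, q (β t) = q (β' t)) : b = b' := by
  let c := β.map hq.2.1
  refine hq.eq_of_lift_of_homotopic_refl hfib (β.symm.trans β') (c := c.symm.trans c)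
    (fun t => ?_) ⟨(Path.Homotopy.reflSymmTrans c).symm⟩
  rw [Path.trans_apply, Path.trans_apply]
  split_ifs
  · simp [c]
  · exact (h _).symm

end TotallyPathDisconnectedFibers

theorem stmt12_general (X : Type) [TopologicalSpace X] (p : X)
    (E : Type) [TopologicalSpace E] (q : E → X)
    (hq : IsFibration q)
    (hfib : ∀ x : X, IsTotallyPathDisconnected (↥(q ⁻¹' {x})))
    (htrivE : ∀ e : E, Subsingleton (TopPi1 E e))
    (e : E) (he : q e = p) :
    IsTotallyPathDisconnected (TopPi1 X p) ∧
      ∃ g : TopPi1 X p → ↥(q ⁻¹' {p}),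
        Continuous g ∧ Function.Injective g ∧
        ∀ (α : LoopSp X p) (β : C(unitInterval, E)),
          (∀ t, q (β t) = α.1 t) → β 0 = e →
          (g (TopPi1.mk α)).1 = β 1 := by
  obtain ⟨G, hGc, hGq, hG0⟩ := hq.2.2 (LoopSp X p) (fun _ => e) (fun z => z.1.1 z.2)
    continuous_const (by fun_prop) (fun α => α.2.1.trans he.symm)
  let lift (α : LoopSp X p) : Path e (G (α, 1)) := ⟨⟨fun t => G (α, t), by fun_prop⟩, hG0 α, rfl⟩
  let g₀ (α : LoopSp X p) : q ⁻¹' {p} := ⟨G (α, 1), (hGq (α, 1)).trans α.2.2⟩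
  have hg₀ : Continuous g₀ := by fun_prop
  let g : TopPi1 X p → q ⁻¹' {p} :=
    Quotient.lift (s := pathSetoid _) g₀ fun _ _ => (hfib p).apply_eq_of_joined hg₀
  have hg : Continuous g := hg₀.quotient_lift _
  have hinj : Function.Injective g := by
    refine Quotient.ind₂ (s₁ := pathSetoid _) fun α α' h => Quotient.sound ?_
    have hend : G (α, 1) = G (α', 1) := congrArg Subtype.val h
    exact LoopSp.joined_of_lifts_homotopic hq.2.1
      (Path.homotopic_of_subsingleton_topPi1 (htrivE e) (lift α) ((lift α').cast rfl hend))
      (fun t => hGq (α, t)) (fun t => hGq (α', t))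
  refine ⟨(hfib p).of_continuous_injective hg hinj, g, hg, hinj, fun α β hβ hβ0 => ?_⟩
  exact hq.target_eq_of_lifts hfib (lift α) ⟨β, hβ0, rfl⟩
    fun t => (hGq (α, t)).trans (hβ t).symm

/-- Suppose `X` is a path-connected space, `p ∈ X`, and `q : E → X` is a fibration all
of whose fibres are totally path disconnected and whose total space `E` is simply
connected (path connected with trivial fundamental group). Then `π₁(X,p)` is totally
path disconnected; moreover, fixing `e ∈ E` with `q e = p`, the map sending the class
of a loop `α` to the endpoint of the (unique) lift of `α` starting at `e` is a
well-defined continuous injection `g : π₁(X,p) → q⁻¹(p)`. -/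
theorem stmt12 (X : Type) [TopologicalSpace X] [PathConnectedSpace X] (p : X)
    (E : Type) [TopologicalSpace E] (q : E → X)
    (hq : IsFibration q)
    (hfib : ∀ x : X, IsTotallyPathDisconnected (↥(q ⁻¹' {x})))
    (hpcE : PathConnectedSpace E)
    (htrivE : ∀ e : E, Subsingleton (TopPi1 E e))
    (e : E) (he : q e = p) :
    IsTotallyPathDisconnected (TopPi1 X p) ∧
      ∃ g : TopPi1 X p → ↥(q ⁻¹' {p}),
        Continuous g ∧ Function.Injective g ∧
        ∀ (α : LoopSp X p) (β : C(unitInterval, E)),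
          (∀ t, q (β t) = α.1 t) → β 0 = e →
          (g (TopPi1.mk α)).1 = β 1 :=
  stmt12_general X p E q hq hfib htrivE e he
end
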